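/- arXiv:1308.1190 — 2 statements merged into one kernel-verified Lean document; each statement's English description precedes it below -/
import Mathlib

section
/- For the identity operator Id on Λ²ℝⁿ, the quadratic vector field Q(R) = R² + R^# satisfies Q(Id) = (n−1)·Id. -/
/-! With `r i = ∑ₖ η i k ²`, the `(i, j)` entry of `[η, [η, eᵢ ∧ eⱼ]]` is
`-r i - r j + 2 η i j ²`; summing over `i < j` gives `⟨Id^# η, η⟩ = (n - 2) |η|²`.
A symmetric operator is determined by its quadratic form (polarization), so
`Id^# = (n - 2) Id` and `Id² + Id^# = (n - 1) Id`. -/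

open Matrix

noncomputable section

/-! Model of Λ²ℝⁿ as the space of skew-symmetric n×n real matrices, via the
identification x∧y ↦ (u ↦ ⟨x,u⟩y - ⟨y,u⟩x), with inner product
⟨x∧y, z∧t⟩ = ⟨x,z⟩⟨y,t⟩ - ⟨x,t⟩⟨y,z⟩, i.e. ⟨A,B⟩ = (1/2) tr(AᵀB). -/

/-- Λ²ℝⁿ, modelled as skew-symmetric matrices. -/
def sk (n : ℕ) : Submodule ℝ (Matrix (Fin n) (Fin n) ℝ) where
  carrier := {A | Aᵀ = -A}
  add_mem' := by
    intro a b ha hb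
    simp only [Set.mem_setOf_eq] at *
    rw [Matrix.transpose_add, ha, hb, neg_add]
  zero_mem' := by simp
  smul_mem' := by
    intro c a ha
    simp only [Set.mem_setOf_eq] at *
    rw [Matrix.transpose_smul, ha, smul_neg]

theorem sk_mem {n : ℕ} {A : Matrix (Fin n) (Fin n) ℝ} : A ∈ sk n ↔ Aᵀ = -A := Iff.rfl

/-- The inner product on Λ²ℝⁿ induced by the standard one on ℝⁿ. -/
def ip {n : ℕ} (A B : sk n) : ℝ := (∑ i, ∑ j, A.1 i j * B.1 i j) / 2

/-- The wedge product x∧y of two vectors of ℝⁿ, as an element of Λ²ℝⁿ. -/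
def wedge {n : ℕ} (x y : Fin n → ℝ) : sk n :=
  ⟨Matrix.of fun i j => x i * y j - x j * y i, by
    rw [sk_mem]
    ext i j
    simp only [Matrix.transpose_apply, Matrix.of_apply, Matrix.neg_apply]
    ring⟩

/-- The Lie bracket on Λ²ℝⁿ ≅ so(n). -/
def br {n : ℕ} (A B : sk n) : sk n :=
  ⟨A.1 * B.1 - B.1 * A.1, by
    have hA := A.2
    have hB := B.2
    rw [sk_mem] at *
    rw [Matrix.transpose_sub, Matrix.transpose_mul, Matrix.transpose_mul, hA, hB]
    simp only [Matrix.neg_mul, Matrix.mul_neg, neg_neg, neg_sub]⟩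

/-- The i-th standard basis vector of ℝⁿ. -/
def stdVec (n : ℕ) (i : Fin n) : Fin n → ℝ := Pi.single i 1

/-- A symmetric endomorphism of Λ²ℝⁿ. -/
def IsSym {n : ℕ} (R : sk n →ₗ[ℝ] sk n) : Prop := ∀ A B, ip (R A) B = ip A (R B)

/-- The first Bianchi identity. -/
def Bianchi {n : ℕ} (R : sk n →ₗ[ℝ] sk n) : Prop :=
  ∀ x y z t : Fin n → ℝ,
    ip (R (wedge x y)) (wedge z t) + ip (R (wedge z x)) (wedge y t)
      + ip (R (wedge y z)) (wedge x t) = 0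

/-- The quadratic form η ↦ ⟨R^# η, η⟩ = -(1/2) ∑ᵢ ⟨[η, R([η, R(ωᵢ)])], ωᵢ⟩,
summed over the orthonormal basis (ωᵢⱼ = eᵢ∧eⱼ)_{i<j} of Λ²ℝⁿ. -/
def sharpForm {n : ℕ} (R : sk n →ₗ[ℝ] sk n) (η : sk n) : ℝ :=
  -(1 / 2) * ∑ i, ∑ j,
    if i < j then
      ip (br η (R (br η (R (wedge (stdVec n i) (stdVec n j))))))
        (wedge (stdVec n i) (stdVec n j))
    else 0

/-- `S` is the sharp R^# of `R`: the symmetric operator whose quadratic form is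
`sharpForm R`. -/
def IsSharp {n : ℕ} (R S : sk n →ₗ[ℝ] sk n) : Prop :=
  IsSym S ∧ ∀ η, ip (S η) η = sharpForm R η

/-- The Ricci tensor of a curvature operator. -/
def ric {n : ℕ} (R : sk n →ₗ[ℝ] sk n) (x y : Fin n → ℝ) : ℝ :=
  ∑ i, ip (R (wedge x (stdVec n i))) (wedge y (stdVec n i))

/-- The inner product on endomorphisms of Λ²ℝⁿ induced by that of Λ²ℝⁿ. -/
def opIp {n : ℕ} (R S : sk n →ₗ[ℝ] sk n) : ℝ :=
  ∑ i, ∑ j,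
    if i < j then
      ip (R (wedge (stdVec n i) (stdVec n j))) (S (wedge (stdVec n i) (stdVec n j)))
    else 0

theorem two_mul_sum_ite_lt_of_symm {ι R : Type*} [Fintype ι] [LinearOrder ι] [CommRing R]
    (f : ι → ι → R) (hf : ∀ i j, f j i = f i j) :
    2 * ∑ i, ∑ j, (if i < j then f i j else 0) = ∑ i, ∑ j, f i j - ∑ i, f i i := by
  have hsplit : ∀ i j, f i j = (if i < j then f i j else 0) + (if j < i then f j i else 0)
      + (if i = j then f i j else 0) := by
    intro i j
    rcases lt_trichotomy i j with h | rfl | h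
    · simp [h, h.ne, h.not_gt]
    · simp
    · simp [h, h.ne', h.not_gt, hf]
  have hswap : ∑ i, ∑ j, (if j < i then f j i else 0) = ∑ i, ∑ j, (if i < j then f i j else 0) :=
    Finset.sum_comm
  conv_rhs => rw [Finset.sum_congr rfl fun i _ => Finset.sum_congr rfl fun j _ => hsplit i j]
  simp only [Finset.sum_add_distrib, hswap, Finset.sum_ite_eq, Finset.mem_univ, if_true]
  ring

section Skew

variable {n : ℕ}

theorem sk_apply_swap (A : sk n) (i j : Fin n) : A.1 j i = -A.1 i j := by
  simpa using congrFun (congrFun (sk_mem.1 A.2) i) j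

theorem sk_apply_self (A : sk n) (i : Fin n) : A.1 i i = 0 := by
  linarith [sk_apply_swap A i i]

theorem ip_comm (A B : sk n) : ip A B = ip B A := by
  simp only [ip, mul_comm]

theorem ip_add_left (A B C : sk n) : ip (A + B) C = ip A C + ip B C := by
  simp only [ip, Submodule.coe_add, Matrix.add_apply, add_mul, Finset.sum_add_distrib, add_div]

theorem ip_add_right (A B C : sk n) : ip A (B + C) = ip A B + ip A C := by
  rw [ip_comm, ip_add_left, ip_comm B, ip_comm C]

theorem ip_smul_left (c : ℝ) (A B : sk n) : ip (c • A) B = c * ip A B := by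
  simp only [ip, Submodule.coe_smul, Matrix.smul_apply, smul_eq_mul, mul_assoc, ← Finset.mul_sum,
    mul_div_assoc]

theorem ip_sub_left (A B C : sk n) : ip (A - B) C = ip A C - ip B C := by
  rw [eq_sub_iff_add_eq, ← ip_add_left, sub_add_cancel]

theorem ip_self_eq_zero {A : sk n} (h : ip A A = 0) : A = 0 := by
  have hsum : ∑ i, ∑ j, A.1 i j * A.1 i j = 0 := by simp only [ip] at h; linarith
  ext i j
  have hrow := (Finset.sum_eq_zero_iff_of_nonneg fun i _ =>
    Finset.sum_nonneg fun j _ => mul_self_nonneg (A.1 i j)).1 hsum i (Finset.mem_univ i)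
  exact mul_self_eq_zero.1 <|
    (Finset.sum_eq_zero_iff_of_nonneg fun j _ => mul_self_nonneg (A.1 i j)).1 hrow j
      (Finset.mem_univ j)

theorem ip_wedge_stdVec (A : sk n) (i j : Fin n) :
    ip A (wedge (stdVec n i) (stdVec n j)) = A.1 i j := by
  simp only [ip, wedge, stdVec, Matrix.of_apply, Pi.single_apply, mul_sub, mul_ite, mul_one,
    mul_zero, Finset.sum_sub_distrib, Finset.sum_ite_eq', Finset.mem_univ, if_true]
  rw [Finset.sum_comm]
  simp only [Finset.sum_ite_eq', Finset.mem_univ, if_true, sk_apply_swap A i j]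
  ring

theorem br_br_wedge_stdVec_apply (η : sk n) {i j : Fin n} (hij : i ≠ j) :
    (br η (br η (wedge (stdVec n i) (stdVec n j)))).1 i j
      = -∑ k, η.1 i k ^ 2 - ∑ k, η.1 j k ^ 2 + 2 * η.1 i j ^ 2 := by
  simp only [br, wedge, stdVec, Matrix.sub_apply, Matrix.mul_apply, Matrix.of_apply,
    Pi.single_apply, mul_sub, sub_mul, mul_ite, ite_mul, mul_one, one_mul, mul_zero, zero_mul,
    Finset.sum_sub_distrib, Finset.sum_ite_eq', Finset.mem_univ, if_true, hij, hij.symm,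
    if_false, Finset.sum_const_zero, Finset.sum_ite_irrel]
  have hrow : ∀ a, ∑ x, η.1 a x * η.1 x a = -∑ k, η.1 a k ^ 2 := fun a => by
    simp only [sk_apply_swap η a, mul_neg, Finset.sum_neg_distrib, sq]
  rw [hrow i, hrow j, sk_apply_self η i]
  ring

theorem sharpForm_id (η : sk n) :
    sharpForm LinearMap.id η = ((n : ℝ) - 2) * ip η η := by
  set r : Fin n → ℝ := fun i => ∑ k, η.1 i k ^ 2
  set h : Fin n → Fin n → ℝ := fun i j => -r i - r j + 2 * η.1 i j ^ 2
  have hsymm : ∀ i j, h j i = h i j := fun i j => by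
    simp only [h, sk_apply_swap η i j]; ring
  have hform : sharpForm LinearMap.id η = -(1 / 2) * ∑ i, ∑ j, if i < j then h i j else 0 := by
    unfold sharpForm
    congr 1
    refine Finset.sum_congr rfl fun i _ => Finset.sum_congr rfl fun j _ => ?_
    split_ifs with hij
    · simp only [LinearMap.id_apply, ip_wedge_stdVec, br_br_wedge_stdVec_apply η hij.ne, h, r]
    · rfl
  have hip : ip η η = (∑ i, r i) / 2 := by simp only [ip, r, sq]
  have htotal : ∑ i, ∑ j, h i j = (2 - 2 * n) * ∑ i, r i := by
    simp only [h, Finset.sum_add_distrib, Finset.sum_sub_distrib, Finset.sum_neg_distrib,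
      Finset.sum_const, Finset.card_univ, Fintype.card_fin, nsmul_eq_mul, ← Finset.mul_sum, r]
    ring
  have hdiag : ∑ i, h i i = -2 * ∑ i, r i := by
    simp only [h, sk_apply_self, Finset.mul_sum]
    exact Finset.sum_congr rfl fun i _ => by ring
  have hhalf := two_mul_sum_ite_lt_of_symm h hsymm
  rw [hform, hip]
  linear_combination (-1 / 4 : ℝ) * hhalf - (1 / 4 : ℝ) * htotal + (1 / 4 : ℝ) * hdiag

end Skew

section Symmetric

variable {n : ℕ}

theorem isSym_smul_id (c : ℝ) : IsSym (c • LinearMap.id : sk n →ₗ[ℝ] sk n) := fun A B => by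
  simp only [LinearMap.smul_apply, LinearMap.id_apply, ip_smul_left, ip_comm A (c • B)]
  rw [ip_comm]

theorem IsSym.sub {R S : sk n →ₗ[ℝ] sk n} (hR : IsSym R) (hS : IsSym S) : IsSym (R - S) :=
  fun A B => by
    rw [LinearMap.sub_apply, LinearMap.sub_apply, ip_sub_left, ip_comm A, ip_sub_left, hR, hS,
      ip_comm (R B), ip_comm (S B)]

theorem IsSym.eq_zero_of_ip_apply_self {R : sk n →ₗ[ℝ] sk n} (hR : IsSym R)
    (h : ∀ η, ip (R η) η = 0) : R = 0 := by
  have hpolar : ∀ x y, ip (R x) y = 0 := fun x y => by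
    have hxy := h (x + y)
    rw [map_add, ip_add_left, ip_add_right, ip_add_right, h x, h y, hR y x, ip_comm y] at hxy
    linarith
  ext1 x
  exact ip_self_eq_zero (hpolar x (R x))

theorem IsSym.ext_of_ip_apply_self {R S : sk n →ₗ[ℝ] sk n} (hR : IsSym R) (hS : IsSym S)
    (h : ∀ η, ip (R η) η = ip (S η) η) : R = S :=
  sub_eq_zero.1 <| (hR.sub hS).eq_zero_of_ip_apply_self fun η => by
    rw [LinearMap.sub_apply, ip_sub_left, h, sub_self]

end Symmetric

/-- For the identity operator Id on Λ²ℝⁿ, the quadratic vector field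
Q(R) = R² + R^# satisfies Q(Id) = (n-1)·Id. -/
theorem stmt7 (n : ℕ) (S : sk n →ₗ[ℝ] sk n) (hS : IsSharp LinearMap.id S) :
    (LinearMap.id ∘ₗ LinearMap.id : sk n →ₗ[ℝ] sk n) + S
      = ((n : ℝ) - 1) • LinearMap.id := by
  obtain ⟨hSym, hForm⟩ := hS
  have hS : S = ((n : ℝ) - 2) • LinearMap.id :=
    hSym.ext_of_ip_apply_self (isSym_smul_id _) fun η => by
      rw [hForm, sharpForm_id, LinearMap.smul_apply, LinearMap.id_apply, ip_smul_left]
  ext1 η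
  simp only [hS, LinearMap.add_apply, LinearMap.comp_apply, LinearMap.smul_apply,
    LinearMap.id_apply]
  module
end
end

section
/- Let C be a closed convex cone in S²_B Λ²ℝⁿ, invariant under the ODE dR/dt = Q(R) (Ricci flow invariant), and suppose R̄ ∈ C satisfies Q(R̄_Id) = (1−ε)R̄_Id and Q(R̄_W) = R̄_W for its identity and Weyl components, with 0 < ε < 1 and R̄₀ = 0. Then the explicit solution R̄(t) = (1/(1−(1−ε)t)) R̄_Id + (1/(1−t)) R̄_W solves dR̄/dt = Q(R̄(t)) for t ∈ [0,1), and consequently R̄_W = lim_{t→1} (1−t)R̄(t) lies in C. -/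
/-!
Since `Q(a R_Id + b R_W) = a²(1-ε) R_Id + b² R_W`, the ODE decouples into the scalar Riccati
equations `a' = (1-ε) a²` and `b' = b²` with `a(0) = b(0) = 1`, solved by `1/(1-(1-ε)t)` and
`1/(1-t)`. The curve starts in `C`, so it stays in `C` up to `t = 1`; rescaling by `1 - t ≥ 0`
keeps it in the cone, and as `t → 1⁻` the `R_Id` coefficient `(1-t)/(1-(1-ε)t)` tends to `0`,
so `R_W` is a limit of points of the closed set `C`.
-/

open Filter Topology Set

theorem hasDerivAt_one_div_one_sub_mul (c t : ℝ) (h : c * t ≠ 1) :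
    HasDerivAt (fun s : ℝ => 1 / (1 - c * s)) (c * (1 / (1 - c * t)) ^ 2) t := by
  have hne : 1 - c * t ≠ 0 := sub_ne_zero.mpr (Ne.symm h)
  have hlin : HasDerivAt (fun s : ℝ => 1 - c * s) (-c) t := by
    simpa using ((hasDerivAt_id t).const_mul c).const_sub 1
  simp only [one_div]
  exact (hlin.inv hne).congr_deriv (by rw [inv_pow, neg_neg, div_eq_mul_inv])

theorem IsClosed.mem_of_tendsto_one_sub_smul {E : Type*} [NormedAddCommGroup E]
    [NormedSpace ℝ E] {C : Set E} (hclosed : IsClosed C)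
    (hcone : ∀ x ∈ C, ∀ r : ℝ, 0 ≤ r → r • x ∈ C) {R : ℝ → E}
    (hR : ∀ t ∈ Ico (0 : ℝ) 1, R t ∈ C) {v : E}
    (hlim : Tendsto (fun t : ℝ => (1 - t) • R t) (𝓝[<] 1) (𝓝 v)) : v ∈ C := by
  refine hclosed.mem_of_tendsto hlim ?_
  filter_upwards [Ioo_mem_nhdsLT (zero_lt_one' ℝ)] with t ht
  exact hcone _ (hR t (Ioo_subset_Ico_self ht)) _ (sub_nonneg.mpr ht.2.le)

theorem stmt12_general {E : Type*} [NormedAddCommGroup E] [NormedSpace ℝ E]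
    (Q : E → E) (C : Set E) (hclosed : IsClosed C)
    (hcone : ∀ x ∈ C, ∀ r : ℝ, 0 ≤ r → r • x ∈ C)
    (hinv : ∀ (R : ℝ → E) (T : ℝ), 0 < T →
      (∀ t ∈ Set.Ico (0 : ℝ) T, HasDerivAt R (Q (R t)) t) → R 0 ∈ C →
      ∀ t ∈ Set.Ico (0 : ℝ) T, R t ∈ C)
    (RId RW : E) (ε : ℝ) (hε0 : 0 < ε)
    (hquad : ∀ a b : ℝ, Q (a • RId + b • RW) = (a ^ 2) • Q RId + (b ^ 2) • Q RW)
    (hQI : Q RId = (1 - ε) • RId) (hQW : Q RW = RW)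
    (hmem : RId + RW ∈ C) :
    (∀ t ∈ Set.Ico (0 : ℝ) 1,
      HasDerivAt (fun s : ℝ => (1 / (1 - (1 - ε) * s)) • RId + (1 / (1 - s)) • RW)
        (Q ((1 / (1 - (1 - ε) * t)) • RId + (1 / (1 - t)) • RW)) t) ∧
    Filter.Tendsto
      (fun t : ℝ => (1 - t) • ((1 / (1 - (1 - ε) * t)) • RId + (1 / (1 - t)) • RW))
      (nhdsWithin 1 (Set.Iio 1)) (nhds RW) ∧
    RW ∈ C := by
  have hderiv : ∀ t ∈ Ico (0 : ℝ) 1,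
      HasDerivAt (fun s : ℝ => (1 / (1 - (1 - ε) * s)) • RId + (1 / (1 - s)) • RW)
        (Q ((1 / (1 - (1 - ε) * t)) • RId + (1 / (1 - t)) • RW)) t := by
    rintro t ⟨ht0, ht1⟩
    have hId := hasDerivAt_one_div_one_sub_mul (1 - ε) t (by nlinarith)
    have hW := hasDerivAt_one_div_one_sub_mul 1 t (by linarith)
    simp only [one_mul] at hW
    rw [hquad, hQI, hQW, smul_smul, mul_comm]
    exact (hId.smul_const RId).add (hW.smul_const RW)
  have hlim : Tendsto
      (fun t : ℝ => (1 - t) • ((1 / (1 - (1 - ε) * t)) • RId + (1 / (1 - t)) • RW))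
      (𝓝[<] 1) (𝓝 RW) := by
    have hcont : ContinuousAt (fun t : ℝ => ((1 - t) / (1 - (1 - ε) * t)) • RId + RW) 1 := by
      have : (1 : ℝ) - (1 - ε) * 1 ≠ 0 := by linarith
      fun_prop (disch := exact this)
    refine (tendsto_nhdsWithin_of_tendsto_nhds hcont).congr' ?_ |>.trans (by simp)
    filter_upwards [self_mem_nhdsWithin] with t (ht : t < 1)
    have : 1 - t ≠ 0 := by linarith
    rw [smul_add, smul_smul, smul_smul, mul_one_div, mul_one_div, div_self this, one_smul]
  refine ⟨hderiv, hlim, hclosed.mem_of_tendsto_one_sub_smul hcone ?_ hlim⟩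
  exact hinv _ 1 one_pos hderiv (by simpa using hmem)

/-- Let C be a closed convex cone in the space of algebraic curvature
operators (modelled by a finite-dimensional real normed space E), invariant under the
ODE dR/dt = Q(R) (Ricci flow invariant).  Suppose R̄ = R̄_Id + R̄_W ∈ C where
Q(R̄_Id) = (1-ε)•R̄_Id and Q(R̄_W) = R̄_W with 0 < ε < 1 (the traceless Ricci part
R̄₀ being 0), and Q is quadratic with B(R̄_Id, R̄_W) = 0, so that
Q(a•R̄_Id + b•R̄_W) = a²•Q(R̄_Id) + b²•Q(R̄_W).  Then the explicit curve
R̄(t) = (1/(1-(1-ε)t))•R̄_Id + (1/(1-t))•R̄_W solves dR̄/dt = Q(R̄(t)) on [0,1),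
R̄_W = lim_{t→1⁻} (1-t)•R̄(t), and consequently R̄_W ∈ C. -/
theorem stmt12 {E : Type*} [NormedAddCommGroup E] [NormedSpace ℝ E]
    [FiniteDimensional ℝ E]
    (Q : E → E) (C : Set E) (hclosed : IsClosed C) (hconv : Convex ℝ C)
    (hcone : ∀ x ∈ C, ∀ r : ℝ, 0 ≤ r → r • x ∈ C)
    (hinv : ∀ (R : ℝ → E) (T : ℝ), 0 < T →
      (∀ t ∈ Set.Ico (0 : ℝ) T, HasDerivAt R (Q (R t)) t) → R 0 ∈ C →
      ∀ t ∈ Set.Ico (0 : ℝ) T, R t ∈ C)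
    (RId RW : E) (ε : ℝ) (hε0 : 0 < ε) (hε1 : ε < 1)
    (hquad : ∀ a b : ℝ, Q (a • RId + b • RW) = (a ^ 2) • Q RId + (b ^ 2) • Q RW)
    (hQI : Q RId = (1 - ε) • RId) (hQW : Q RW = RW)
    (hmem : RId + RW ∈ C) :
    (∀ t ∈ Set.Ico (0 : ℝ) 1,
      HasDerivAt (fun s : ℝ => (1 / (1 - (1 - ε) * s)) • RId + (1 / (1 - s)) • RW)
        (Q ((1 / (1 - (1 - ε) * t)) • RId + (1 / (1 - t)) • RW)) t) ∧
    Filter.Tendsto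
      (fun t : ℝ => (1 - t) • ((1 / (1 - (1 - ε) * t)) • RId + (1 / (1 - t)) • RW))
      (nhdsWithin 1 (Set.Iio 1)) (nhds RW) ∧
    RW ∈ C :=
  stmt12_general Q C hclosed hcone hinv RId RW ε hε0 hquad hQI hQW hmem
end
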